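/- Let E/E₀ be a quadratic extension, U a 2n-dimensional E-vector space with nondegenerate Hermitian form h, τ₁ : ⋀ⁿ_E U → (⋀ⁿ_E U)^* the E-linear isomorphism induced by the wedge pairing ⋀ⁿ_E U × ⋀ⁿ_E U → ⋀²ⁿ_E U ≅ E, and τ₂ : ⋀ⁿ_E U → (⋀ⁿ_E U)^* the conjugate-linear isomorphism induced by ⋀ⁿh. Then the composite ⋆ = τ₁⁻¹ ∘ τ₂ satisfies ⋆ ∘ ⋆ = (−1)ⁿ det(h) · id (as E₀-linear maps, after fixing a trivialization ⋀²ⁿ_E U ≅ E via a basis with det(h) computed in that basis). -/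

import Mathlib

/-!
Choose an `h`-orthogonal basis `f` of `U` (some `h x x ≠ 0` because `σ ≠ id`) and put
`aᵢ = h fᵢ fᵢ`. In the induced basis `f_t` of `⋀ⁿU` (`t ⊆ {1, …, 2n}`, `|t| = n`) the form `⋀ⁿh`
is diagonal with entries `∏_{i ∈ t} aᵢ`, while the wedge pairing pairs `f_t` only with `f_{tᶜ}`,
with value `b_t = ± det_e f`. Hence `⋆ f_t = (∏_{i ∈ t} aᵢ / b_t) f_{tᶜ}`, and since graded
commutativity gives `b_{tᶜ} = (-1)ⁿ b_t`,
`⋆⋆ f_t = (∏ᵢ aᵢ) / ((-1)ⁿ σ(b_t) b_t) · f_t`. Finally `σ(b_t) b_t = σ(det_e f) det_e f`, and the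
change of basis formula for Gram matrices gives `∏ᵢ aᵢ = det_e f · σ(det_e f) · det h`.
-/

/-- The decomposable element `v₁ ∧ ⋯ ∧ v_n` of the `n`-th exterior power
`⋀[R]^n M ⊆ ExteriorAlgebra R M`. -/
noncomputable def wedgeProd (R : Type*) [CommRing R] {M : Type*} [AddCommGroup M]
    [Module R M] (n : ℕ) (v : Fin n → M) : ⋀[R]^n M :=
  ⟨ExteriorAlgebra.ιMulti R n v, ExteriorAlgebra.ιMulti_range R n ⟨v, rfl⟩⟩

open Module ExteriorAlgebra Set.powersetCard
open scoped Matrix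

theorem neg_one_pow_mul_self {R : Type*} [Monoid R] [HasDistribNeg R] (n : ℕ) :
    (-1 : R) ^ (n * n) = (-1) ^ n := by
  rw [pow_mul]
  rcases n.even_or_odd with h | h <;> simp [h.neg_one_pow]

namespace ExteriorAlgebra

variable {R M : Type*} [CommRing R] [AddCommGroup M] [Module R M]

theorem ι_mul_ιMulti_comm (x : M) : ∀ {n : ℕ} (v : Fin n → M),
    ι R x * ιMulti R n v = (-1 : R) ^ n • (ιMulti R n v * ι R x)
  | 0, v => by simp
  | n + 1, v => by
    have hswap : ι R x * ι R (v 0) = -(ι R (v 0) * ι R x) :=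
      eq_neg_of_add_eq_zero_left (ι_add_mul_swap x (v 0))
    rw [ιMulti_succ_apply, ← mul_assoc, hswap, neg_mul, mul_assoc, ι_mul_ιMulti_comm,
      mul_smul_comm, ← mul_assoc, pow_succ, mul_neg_one, neg_smul]

theorem ιMulti_mul_ιMulti_comm : ∀ {m : ℕ} (u : Fin m → M) {n : ℕ} (v : Fin n → M),
    ιMulti R m u * ιMulti R n v = (-1 : R) ^ (m * n) • (ιMulti R n v * ιMulti R m u)
  | 0, u, n, v => by simp
  | m + 1, u, n, v => by
    rw [ιMulti_succ_apply, mul_assoc, ιMulti_mul_ιMulti_comm, mul_smul_comm, ← mul_assoc,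
      ι_mul_ιMulti_comm, smul_mul_assoc, mul_assoc, smul_smul, ← pow_add]
    ring_nf

theorem ιMulti_eq_ιMulti_comp_cast {m k : ℕ} (h : m = k) (v : Fin m → M) :
    ιMulti R m v = ιMulti R k (v ∘ Fin.cast h.symm) := by
  subst h
  rfl

end ExteriorAlgebra

namespace Module.Basis

variable {R M : Type*} [CommRing R] [AddCommGroup M] [Module R M]

theorem det_comp_eq_or_eq_neg {ι : Type*} [Fintype ι] [DecidableEq ι] (e f : Basis ι R M)
    {π : ι → ι} (hπ : Function.Injective π) :
    e.det (f ∘ π) = e.det f ∨ e.det (f ∘ π) = -e.det f := by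
  obtain ⟨τ, rfl⟩ : ∃ τ : Equiv.Perm ι, ⇑τ = π := ⟨.ofBijective π hπ.bijective_of_finite, rfl⟩
  rw [AlternatingMap.map_perm]
  rcases Int.units_eq_one_or (Equiv.Perm.sign τ) with hτ | hτ <;> simp [hτ]

noncomputable def exteriorDet {k : ℕ} (e : Basis (Fin k) R M) :
    _root_.ExteriorAlgebra R M →ₗ[R] R :=
  liftAlternating (Function.update 0 k e.det)

@[simp]
theorem exteriorDet_ιMulti {k : ℕ} (e : Basis (Fin k) R M) (v : Fin k → M) :
    e.exteriorDet (ιMulti R k v) = e.det v := by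
  rw [exteriorDet, liftAlternating_apply_ιMulti, Function.update_self]

theorem exteriorDet_ιMulti_mul_ιMulti {k m n : ℕ} (e f : Basis (Fin k) R M) (hk : m + n = k)
    {u : Fin m → Fin k} {v : Fin n → Fin k} (huv : Function.Injective (Fin.append u v)) :
    e.exteriorDet (ιMulti R m (f ∘ u) * ιMulti R n (f ∘ v)) = e.det f ∨
      e.exteriorDet (ιMulti R m (f ∘ u) * ιMulti R n (f ∘ v)) = -e.det f := by
  have happend : Fin.append (f ∘ u) (f ∘ v) = f ∘ Fin.append u v := by
    funext i
    refine Fin.addCases (fun i => ?_) (fun i => ?_) i <;> simp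
  rw [ιMulti_mul_ιMulti, happend, ιMulti_eq_ιMulti_comp_cast hk, exteriorDet_ιMulti]
  exact e.det_comp_eq_or_eq_neg f (huv.comp (Fin.cast_injective _))

end Module.Basis

namespace LinearMap

section CommRing

variable {R M : Type*} [CommRing R] [AddCommGroup M] [Module R M] {σ : R →+* R}

theorem det_gram_eq_det_mul_det_mul_det_gram {ι : Type*} [Fintype ι] [DecidableEq ι]
    (B : M →ₗ[R] M →ₛₗ[σ] R) (e f : Basis ι R M) :
    (Matrix.of fun i j => B (f i) (f j)).det =
      e.det f * σ (e.det f) * (Matrix.of fun i j => B (e i) (e j)).det := by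
  have hgram : (Matrix.of fun i j => B (f i) (f j)) =
      (e.toMatrix f)ᵀ * (Matrix.of fun i j => B (e i) (e j)) * (e.toMatrix f).map σ := by
    ext i j
    conv_lhs => rw [Matrix.of_apply, ← e.sum_repr (f i), ← e.sum_repr (f j)]
    simp only [map_sum, map_smul, map_smulₛₗ, sum_apply, smul_apply, smul_eq_mul,
      Finset.mul_sum, Matrix.mul_apply, Matrix.transpose_apply, Matrix.map_apply,
      Basis.toMatrix_apply, Matrix.of_apply, Finset.sum_mul]
    refine Finset.sum_congr rfl fun p _ => Finset.sum_congr rfl fun q _ => ?_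
    ring
  rw [hgram, Matrix.det_mul, Matrix.det_mul, Matrix.det_transpose, ← RingHom.mapMatrix_apply,
    ← RingHom.map_det, ← Basis.det_apply]
  ring

theorem IsOrthoᵢ.det_gram {ι : Type*} [Fintype ι] [DecidableEq ι] {B : M →ₗ[R] M →ₛₗ[σ] R}
    {v : ι → M} (hv : B.IsOrthoᵢ v) :
    (Matrix.of fun i j => B (v i) (v j)).det = ∏ i, B (v i) (v i) := by
  rw [← Matrix.det_diagonal]
  congr 1
  ext i j
  rcases eq_or_ne i j with rfl | hij
  · simp
  · rw [Matrix.of_apply, Matrix.diagonal_apply_ne _ hij]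
    exact hv hij

theorem IsOrthoᵢ.det_apply_powersetCard {ι : Type*} [LinearOrder ι] {n : ℕ}
    {B : M →ₗ[R] M →ₛₗ[σ] R} {v : ι → M} (hv : B.IsOrthoᵢ v)
    (s t : Set.powersetCard ι n) :
    (Matrix.of fun i j => B (v (ofFinEmbEquiv.symm s i)) (v (ofFinEmbEquiv.symm t j))).det =
      if s = t then ∏ i ∈ t.val, B (v i) (v i) else 0 := by
  split_ifs with hst
  · subst hst
    have hvs : B.IsOrthoᵢ (v ∘ ofFinEmbEquiv.symm s) :=
      hv.comp_of_injective (ofFinEmbEquiv.symm s).injective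
    refine hvs.det_gram.trans ?_
    rw [← s.val.prod_coe_sort]
    exact Fintype.prod_equiv (orderIsoOfFin s).toEquiv _ _ fun _ => rfl
  · obtain ⟨i, his, hit⟩ := (exists_mem_notMem_iff_ne s t).mp hst
    obtain ⟨k, rfl⟩ := (mem_range_ofFinEmbEquiv_symm_iff_mem s i).mpr his
    refine Matrix.det_eq_zero_of_row_eq_zero k fun j => hv fun h => hit ?_
    rw [h]
    exact (mem_range_ofFinEmbEquiv_symm_iff_mem t _).mp ⟨j, rfl⟩

end CommRing

section Field

variable {K V : Type*} [Field K] [AddCommGroup V] [Module K V] {σ : K →+* K}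

theorem exists_apply_self_ne_zero (hσ : σ ≠ RingHom.id K) {B : V →ₗ[K] V →ₛₗ[σ] K}
    (hB : B ≠ 0) : ∃ x, B x x ≠ 0 := by
  obtain ⟨c, hc⟩ : ∃ c, σ c ≠ c := by
    by_contra! h
    exact hσ (RingHom.ext h)
  by_contra! hdiag
  refine hB (LinearMap.ext₂ fun x y => ?_)
  have h₁ := hdiag (x + y)
  have h₂ := hdiag (x + c • y)
  simp only [map_add, map_smul, add_apply, smul_apply, map_smulₛₗ, smul_eq_mul, hdiag] at h₁ h₂
  have : (σ c - c) * B x y = 0 := by linear_combination h₂ - c * h₁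
  simpa [sub_ne_zero.mpr hc] using this

theorem exists_isOrthoᵢ_basis_of_hermitian [FiniteDimensional K V] (hσ : Function.Involutive σ)
    (hσ₁ : σ ≠ RingHom.id K) {B : V →ₗ[K] V →ₛₗ[σ] K} (hB : ∀ x y, B x y = σ (B y x)) {d : ℕ}
    (hd : finrank K V = d) : ∃ v : Basis (Fin d) K V, B.IsOrthoᵢ v := by
  induction d generalizing V with
  | zero => exact ⟨basisOfFinrankZero hd, fun i => i.elim0⟩
  | succ d ih =>
  obtain rfl | hB₀ := eq_or_ne B 0
  · exact ⟨(finBasis K V).reindex (finCongr hd), fun _ _ _ => rfl⟩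
  obtain ⟨x, hx⟩ := exists_apply_self_ne_zero hσ₁ hB₀
  set W := (K ∙ x).orthogonalBilin B
  have hdisj : Disjoint (K ∙ x) W :=
    disjoint_iff.mpr (span_singleton_inf_orthogonal_eq_bot B x hx)
  have hsp (z : V) : z + (-σ (B x z / B x x)) • x ∈ W := by
    rw [show W = ker (B x) from orthogonal_span_singleton_eq_to_lin_ker x, mem_ker, map_add,
      map_smulₛₗ, map_neg, hσ, smul_eq_mul, neg_mul, div_mul_cancel₀ _ hx, add_neg_cancel]
  have hcompl : IsCompl (K ∙ x) W := by
    refine ⟨hdisj, codisjoint_iff.mpr (Submodule.eq_top_iff'.mpr fun z => ?_)⟩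
    have := Submodule.add_mem_sup (Submodule.smul_mem _ (σ (B x z / B x x))
      (Submodule.mem_span_singleton_self x)) (hsp z)
    rwa [neg_smul, add_neg_cancel_comm_assoc] at this
  rw [← Submodule.finrank_add_eq_of_isCompl hcompl, finrank_span_singleton (ne_zero_of_map hx),
    add_comm, Nat.add_right_cancel_iff] at hd
  obtain ⟨v, hv⟩ := ih (B := B.domRestrict₁₂ W W) (fun y z => hB y z) hd
  have hli (c : K) (y : V) (hy : y ∈ W) (hcy : c • x + y = 0) : c = 0 := by
    have hcx : c • x ∈ W := by
      rw [eq_neg_of_add_eq_zero_left hcy]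
      exact W.neg_mem hy
    have := Submodule.disjoint_def.mp hdisj _ (Submodule.smul_mem _ c
      (Submodule.mem_span_singleton_self x)) hcx
    exact (smul_eq_zero.mp this).resolve_right (ne_zero_of_map hx)
  refine ⟨Basis.mkFinCons x v hli fun z => ⟨_, hsp z⟩, ?_⟩
  rw [Basis.coe_mkFinCons]
  intro i j
  refine Fin.cases ?_ (fun i => ?_) i <;> refine Fin.cases ?_ (fun j => ?_) j <;> intro hij <;>
    simp only [Function.onFun, Fin.cons_zero, Fin.cons_succ, Function.comp_apply]
  · exact (hij rfl).elim
  · exact (v j).prop _ (Submodule.mem_span_singleton_self x)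
  · rw [hB, (v i).prop _ (Submodule.mem_span_singleton_self x), map_zero]
  · exact hv (ne_of_apply_ne _ hij)

end Field

end LinearMap

def Set.powersetCard.complTwoMul (n : ℕ) :
    Set.powersetCard (Fin (2 * n)) n ≃ Set.powersetCard (Fin (2 * n)) n :=
  compl (by rw [Fintype.card_fin, two_mul])

section ExteriorPowerBasis

variable {R M : Type*} [CommRing R] [AddCommGroup M] [Module R M] {n : ℕ}

theorem coe_exteriorPower_basis_apply {ι : Type*} [LinearOrder ι] (f : Module.Basis ι R M)
    (s : Set.powersetCard ι n) :
    (f.exteriorPower n s : ExteriorAlgebra R M) = ιMulti R n (f ∘ ofFinEmbEquiv.symm s) := by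
  rw [exteriorPower.basis_apply]
  rfl

theorem exteriorPower_basis_apply_eq_wedgeProd {ι : Type*} [LinearOrder ι] (f : Module.Basis ι R M)
    (s : Set.powersetCard ι n) :
    f.exteriorPower n s = wedgeProd R n (f ∘ ofFinEmbEquiv.symm s) := by
  rw [exteriorPower.basis_apply]
  rfl

theorem exteriorDet_exteriorPower_basis_compl_mul_of_ne (e f : Module.Basis (Fin (2 * n)) R M)
    {s t : Set.powersetCard (Fin (2 * n)) n} (hst : s ≠ t) :
    e.exteriorDet (f.exteriorPower n (complTwoMul n t) * f.exteriorPower n s :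
      ExteriorAlgebra R M) = 0 := by
  have hmeet : ¬Disjoint (complTwoMul n t).val s.val := fun hdisj => hst <| by
    refine eq_iff_subset.mpr fun x hxs => ?_
    by_contra hxt
    exact Finset.disjoint_left.mp hdisj (Finset.mem_compl.mpr hxt) hxs
  simp only [coe_exteriorPower_basis_apply]
  rw [← ιMulti_family, ← ιMulti_family, ιMulti_family_mul_of_not_disjoint R f _ _ hmeet, map_zero]

theorem exteriorDet_exteriorPower_basis_compl_mul (e f : Module.Basis (Fin (2 * n)) R M)
    (t : Set.powersetCard (Fin (2 * n)) n) :
    e.exteriorDet (f.exteriorPower n (complTwoMul n t) * f.exteriorPower n t :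
      ExteriorAlgebra R M) = e.det f ∨
    e.exteriorDet (f.exteriorPower n (complTwoMul n t) * f.exteriorPower n t :
      ExteriorAlgebra R M) = -e.det f := by
  simp only [coe_exteriorPower_basis_apply]
  refine e.exteriorDet_ιMulti_mul_ιMulti f (two_mul n).symm <| Fin.append_injective_iff.mpr
    ⟨(ofFinEmbEquiv.symm _).injective, (ofFinEmbEquiv.symm _).injective, fun i j hij => ?_⟩
  have hi := (mem_range_ofFinEmbEquiv_symm_iff_mem (complTwoMul n t) _).mp ⟨i, rfl⟩
  rw [hij, complTwoMul, mem_compl] at hi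
  exact hi ((mem_range_ofFinEmbEquiv_symm_iff_mem t _).mp ⟨j, rfl⟩)

theorem exteriorPower_basis_mul_comm {ι : Type*} [LinearOrder ι] (f : Module.Basis ι R M)
    (s t : Set.powersetCard ι n) :
    (f.exteriorPower n s * f.exteriorPower n t : ExteriorAlgebra R M) =
      (-1 : R) ^ n • (f.exteriorPower n t * f.exteriorPower n s : ExteriorAlgebra R M) := by
  simp only [coe_exteriorPower_basis_apply]
  rw [ιMulti_mul_ιMulti_comm, neg_one_pow_mul_self]

variable {σ : R →+* R}

theorem apply_exteriorPower_basis_of_isOrthoᵢ {ι : Type*} [LinearOrder ι] {h : M →ₗ[R] M →ₛₗ[σ] R}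
    {f : Module.Basis ι R M} (hf : h.IsOrthoᵢ f) {Hn : ⋀[R]^n M →ₗ[R] ⋀[R]^n M →ₛₗ[σ] R}
    (hHn : ∀ v u : Fin n → M, Hn (wedgeProd R n v) (wedgeProd R n u) =
      (Matrix.of fun i j => h (v i) (u j)).det) (s t : Set.powersetCard ι n) :
    Hn (f.exteriorPower n s) (f.exteriorPower n t) =
      if s = t then ∏ i ∈ t.val, h (f i) (f i) else 0 := by
  rw [exteriorPower_basis_apply_eq_wedgeProd, exteriorPower_basis_apply_eq_wedgeProd, hHn]
  exact hf.det_apply_powersetCard s t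

end ExteriorPowerBasis

section Semilinear

variable {R W : Type*} [CommRing R] [AddCommGroup W] [Module R W] {σ : R →+* R}
  {T : W →ₗ[R] Module.Dual R W} {H : W →ₗ[R] W →ₛₗ[σ] R} {star : W → W}

theorem star_map_add (hT : Function.Injective T) (hstar : ∀ x y, T (star x) y = H y x)
    (x y : W) : star (x + y) = star x + star y :=
  hT <| LinearMap.ext fun z => by simp only [hstar, map_add, LinearMap.add_apply]

theorem star_map_smul (hT : Function.Injective T) (hstar : ∀ x y, T (star x) y = H y x)
    (c : R) (x : W) : star (c • x) = σ c • star x :=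
  hT <| LinearMap.ext fun z => by
    simp only [hstar, map_smul, LinearMap.smul_apply, map_smulₛₗ, smul_eq_mul]

end Semilinear

section Star

variable {E U : Type*} [Field E] [AddCommGroup U] [Module E U] {n : ℕ} {σ : E →+* E}
  {h : U →ₗ[E] U →ₛₗ[σ] E} {e f : Module.Basis (Fin (2 * n)) E U}
  {Hn : ⋀[E]^n U →ₗ[E] ⋀[E]^n U →ₛₗ[σ] E} {T1 : ⋀[E]^n U →ₗ[E] Module.Dual E (⋀[E]^n U)}
  {star : ⋀[E]^n U → ⋀[E]^n U}

theorem apply_exteriorPower_basis_compl_eq_or_eq_neg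
    (hT1 : ∀ x y, T1 x y = e.exteriorDet (x * y : ExteriorAlgebra E U))
    (t : Set.powersetCard (Fin (2 * n)) n) :
    T1 (f.exteriorPower n (complTwoMul n t)) (f.exteriorPower n t) = e.det f ∨
      T1 (f.exteriorPower n (complTwoMul n t)) (f.exteriorPower n t) = -e.det f := by
  rw [hT1]
  exact exteriorDet_exteriorPower_basis_compl_mul e f t

theorem star_exteriorPower_basis (hf : h.IsOrthoᵢ f)
    (hHn : ∀ v u : Fin n → U, Hn (wedgeProd E n v) (wedgeProd E n u) =
      (Matrix.of fun i j => h (v i) (u j)).det)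
    (hT1 : ∀ x y, T1 x y = e.exteriorDet (x * y : ExteriorAlgebra E U))
    (hT1inj : Function.Injective T1) (hstar : ∀ x y, T1 (star x) y = Hn y x)
    (t : Set.powersetCard (Fin (2 * n)) n) :
    star (f.exteriorPower n t) =
      ((∏ i ∈ t.val, h (f i) (f i)) /
        T1 (f.exteriorPower n (complTwoMul n t)) (f.exteriorPower n t)) •
        f.exteriorPower n (complTwoMul n t) := by
  have hb : T1 (f.exteriorPower n (complTwoMul n t)) (f.exteriorPower n t) ≠ 0 := by
    rcases apply_exteriorPower_basis_compl_eq_or_eq_neg (f := f) hT1 t with hb | hb <;>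
      rw [hb] <;> simp [(e.isUnit_det f).ne_zero]
  apply hT1inj
  refine (f.exteriorPower n).ext fun s => ?_
  rw [hstar, apply_exteriorPower_basis_of_isOrthoᵢ hf hHn, map_smul, LinearMap.smul_apply,
    smul_eq_mul]
  rcases eq_or_ne s t with rfl | hst
  · rw [if_pos rfl, div_mul_cancel₀ _ hb]
  · rw [if_neg hst, hT1 _ (f.exteriorPower n s),
      exteriorDet_exteriorPower_basis_compl_mul_of_ne e f hst, mul_zero]

theorem star_star_exteriorPower_basis (hherm : ∀ u v, h u v = σ (h v u)) (hf : h.IsOrthoᵢ f)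
    (hHn : ∀ v u : Fin n → U, Hn (wedgeProd E n v) (wedgeProd E n u) =
      (Matrix.of fun i j => h (v i) (u j)).det)
    (hT1 : ∀ x y, T1 x y = e.exteriorDet (x * y : ExteriorAlgebra E U))
    (hT1inj : Function.Injective T1) (hstar : ∀ x y, T1 (star x) y = Hn y x)
    (t : Set.powersetCard (Fin (2 * n)) n) :
    star (star (f.exteriorPower n t)) =
      ((-1 : E) ^ n * (Matrix.of fun i j => h (e i) (e j)).det) • f.exteriorPower n t := by
  set b := T1 (f.exteriorPower n (complTwoMul n t)) (f.exteriorPower n t)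
  set d := e.det f
  have hd : d ≠ 0 := (e.isUnit_det f).ne_zero
  have hcompl : complTwoMul n (complTwoMul n t) = t := (complTwoMul n).symm_apply_apply t
  have hflip : T1 (f.exteriorPower n t) (f.exteriorPower n (complTwoMul n t)) = (-1) ^ n * b := by
    rw [hT1, exteriorPower_basis_mul_comm, map_smul, smul_eq_mul, ← hT1]
  have hnorm : σ b * b = σ d * d := by
    rcases apply_exteriorPower_basis_compl_eq_or_eq_neg (f := f) hT1 t with hb | hb <;>
      simp [b, hb, d]
  have hreal : σ (∏ i ∈ t.val, h (f i) (f i)) = ∏ i ∈ t.val, h (f i) (f i) := by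
    rw [map_prod]
    exact Finset.prod_congr rfl fun i _ => (hherm (f i) (f i)).symm
  have hgram : (∏ i ∈ t.val, h (f i) (f i)) * ∏ i ∈ (complTwoMul n t).val, h (f i) (f i) =
      d * σ d * (Matrix.of fun i j => h (e i) (e j)).det := by
    rw [← LinearMap.det_gram_eq_det_mul_det_mul_det_gram, hf.det_gram]
    exact Finset.prod_mul_prod_compl _ _
  rw [star_exteriorPower_basis hf hHn hT1 hT1inj hstar, star_map_smul hT1inj hstar,
    star_exteriorPower_basis hf hHn hT1 hT1inj hstar, hcompl, smul_smul, hflip, map_div₀, hreal]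
  have hσd : σ d ≠ 0 := (map_ne_zero σ).mpr hd
  congr 1
  calc _ = (∏ i ∈ t.val, h (f i) (f i)) * (∏ i ∈ (complTwoMul n t).val, h (f i) (f i)) /
        ((-1) ^ n * (σ b * b)) := by ring
    _ = d * σ d * (Matrix.of fun i j => h (e i) (e j)).det / ((-1) ^ n * (σ d * d)) := by
        rw [hgram, hnorm]
    _ = _ := by
        field_simp
        rw [← pow_mul, pow_mul', neg_one_sq, one_pow, mul_one]

end Star

theorem star_squared_eq_discriminant_general
    (E : Type*) [Field E]
    (σ : E →+* E)
    (hσinv : ∀ x : E, σ (σ x) = x)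
    (hσne : σ ≠ RingHom.id E)
    (n : ℕ)
    (U : Type*) [AddCommGroup U] [Module E U]
    [FiniteDimensional E U] (hU : Module.finrank E U = 2 * n)
    (e : Module.Basis (Fin (2 * n)) E U)
    (h : U →ₗ[E] (U →ₛₗ[σ] E))
    (hherm : ∀ u v : U, h u v = σ (h v u))
    -- the sesquilinear extension `⋀ⁿh` of `h` to the exterior power
    (Hn : (⋀[E]^n U) →ₗ[E] ((⋀[E]^n U) →ₛₗ[σ] E))
    (hHn : ∀ v u : Fin n → U,
      Hn (wedgeProd E n v) (wedgeProd E n u) =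
        Matrix.det (Matrix.of fun i j => h (v i) (u j)))
    -- `τ₁`, the isomorphism to the dual given by the wedge pairing
    (T1 : (⋀[E]^n U) →ₗ[E] Module.Dual E (⋀[E]^n U))
    (hT1 : ∀ x y : ⋀[E]^n U,
      (x : ExteriorAlgebra E U) * (y : ExteriorAlgebra E U) =
        T1 x y • ((wedgeProd E (2 * n) (fun i => e i) : ⋀[E]^(2 * n) U) :
          ExteriorAlgebra E U))
    (hT1bij : Function.Bijective T1)
    -- `⋆ = τ₁⁻¹ ∘ τ₂`, i.e. `τ₁(⋆ x) = ⋀ⁿh(·, x)`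
    (star : (⋀[E]^n U) → (⋀[E]^n U))
    (hstar : ∀ x y : ⋀[E]^n U, T1 (star x) y = Hn y x) :
    ∀ x : ⋀[E]^n U,
      star (star x) =
        ((-1 : E) ^ n * Matrix.det (Matrix.of fun i j => h (e i) (e j))) • x := by
  obtain ⟨f, hf⟩ := LinearMap.exists_isOrthoᵢ_basis_of_hermitian hσinv hσne hherm hU
  have hT1det (x y : ⋀[E]^n U) : T1 x y = e.exteriorDet (x * y : ExteriorAlgebra E U) := by
    rw [hT1, map_smul, wedgeProd, e.exteriorDet_ιMulti, e.det_self, smul_eq_mul, mul_one]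
  have hstar_add := star_map_add hT1bij.1 hstar
  have hstar_smul := star_map_smul hT1bij.1 hstar
  intro x
  have hx : x ∈ Submodule.span E (Set.range (f.exteriorPower n)) := by
    rw [(f.exteriorPower n).span_eq]
    exact Submodule.mem_top
  induction hx using Submodule.span_induction with
  | mem _ hx =>
    obtain ⟨t, rfl⟩ := hx
    exact star_star_exteriorPower_basis hherm hf hHn hT1det hT1bij.1 hstar t
  | zero =>
    have hzero : star 0 = 0 := by simpa using hstar_smul 0 0
    rw [hzero, hzero, smul_zero]
  | add x y _ _ hx hy => rw [hstar_add, hstar_add, hx, hy, smul_add]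
  | smul c x _ hx => rw [hstar_smul, hstar_smul, hσinv, hx, smul_comm]

/-- Let `E/E₀` be a quadratic extension with conjugation `σ`, `U` a
`2n`-dimensional `E`-vector space with nondegenerate Hermitian form `h`,
`τ₁` the `E`-linear isomorphism `⋀ⁿ_E U → (⋀ⁿ_E U)^*` induced by the wedge
pairing (trivialized by a basis `e` of `U`), and `τ₂` the conjugate-linear
map induced by `⋀ⁿh`. Then `⋆ = τ₁⁻¹ ∘ τ₂` satisfies
`⋆ ∘ ⋆ = (−1)ⁿ det(h) · id`, where `det(h)` is the Gram determinant of `h`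
in the basis `e`. -/
theorem star_squared_eq_discriminant
    (E₀ E : Type*) [Field E₀] [Field E] [CharZero E₀]
    [Algebra E₀ E] (hquad : Module.finrank E₀ E = 2)
    (σ : E →+* E)
    (hσfix : ∀ a : E₀, σ (algebraMap E₀ E a) = algebraMap E₀ E a)
    (hσinv : ∀ x : E, σ (σ x) = x)
    (hσne : σ ≠ RingHom.id E)
    (n : ℕ) (hn : 0 < n)
    (U : Type*) [AddCommGroup U] [Module E U]
    [FiniteDimensional E U] (hU : Module.finrank E U = 2 * n)
    (e : Module.Basis (Fin (2 * n)) E U)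
    (h : U →ₗ[E] (U →ₛₗ[σ] E))
    (hherm : ∀ u v : U, h u v = σ (h v u))
    (hnd : ∀ u : U, (∀ v : U, h u v = 0) → u = 0)
    -- the sesquilinear extension `⋀ⁿh` of `h` to the exterior power
    (Hn : (⋀[E]^n U) →ₗ[E] ((⋀[E]^n U) →ₛₗ[σ] E))
    (hHn : ∀ v u : Fin n → U,
      Hn (wedgeProd E n v) (wedgeProd E n u) =
        Matrix.det (Matrix.of fun i j => h (v i) (u j)))
    -- `τ₁`, the isomorphism to the dual given by the wedge pairing
    (T1 : (⋀[E]^n U) →ₗ[E] Module.Dual E (⋀[E]^n U))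
    (hT1 : ∀ x y : ⋀[E]^n U,
      (x : ExteriorAlgebra E U) * (y : ExteriorAlgebra E U) =
        T1 x y • ((wedgeProd E (2 * n) (fun i => e i) : ⋀[E]^(2 * n) U) :
          ExteriorAlgebra E U))
    (hT1bij : Function.Bijective T1)
    -- `⋆ = τ₁⁻¹ ∘ τ₂`, i.e. `τ₁(⋆ x) = ⋀ⁿh(·, x)`
    (star : (⋀[E]^n U) → (⋀[E]^n U))
    (hstar : ∀ x y : ⋀[E]^n U, T1 (star x) y = Hn y x) :
    ∀ x : ⋀[E]^n U,
      star (star x) =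
        ((-1 : E) ^ n * Matrix.det (Matrix.of fun i j => h (e i) (e j))) • x :=
  star_squared_eq_discriminant_general E σ hσinv hσne n U hU e h hherm Hn hHn T1 hT1 hT1bij star
    hstar
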